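/- arXiv:1401.6439 — 2 statements merged into one kernel-verified Lean document; each statement's English description precedes it below -/
import Mathlib

section
/- Let (n_k) be a sequence of non-zero integers such that P⁺(n_k) → ∞ as k → ∞ and the insulators 𝔦(n_k) are bounded, and let ε > 0. Then for all sufficiently large k, (1 − ε) · log ∏_{p prime, p ≤ P⁺(n_k)} p < log rad(n_k) ≤ log ∏_{p prime, p ≤ P⁺(n_k)} p. -/
open Filter

/-- `(A,B,C)` is a primitive non-cuspidal solution to `A + B + C = 0`. -/
def IsABC (A B C : ℤ) : Prop :=
  A + B + C = 0 ∧ Int.gcd (Int.gcd A B) C = 1 ∧ A * B * C ≠ 0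

/-- The height `H(A,B,C) = max {|A|, |B|, |C|}`. -/
def height (A B C : ℤ) : ℤ := max |A| (max |B| |C|)

/-- The radical of a nonzero integer: its largest squarefree divisor,
the product of the distinct primes dividing it. -/
def rad (n : ℤ) : ℕ := ∏ p ∈ n.natAbs.primeFactors, p

/-- `P⁺(n)`: the largest prime divisor of `n`, or `1` if `|n| = 1`. -/
def Pplus (n : ℤ) : ℕ := max (n.natAbs.primeFactors.sup id) 1

/-- A nonzero integer `m` is insulated if every prime `p ≤ P⁺(m)` divides `m`. -/
def Insulated (m : ℤ) : Prop :=
  m ≠ 0 ∧ ∀ p : ℕ, p.Prime → p ≤ Pplus m → (p : ℤ) ∣ m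

/-- The insulator `𝔦(n)`: the smallest positive integer `I` such that `n * I` is insulated. -/
noncomputable def insulator (n : ℤ) : ℕ := sInf {I : ℕ | 0 < I ∧ Insulated (n * I)}

lemma le_Pplus {n : ℤ} {p : ℕ} (hp : p ∈ n.natAbs.primeFactors) : p ≤ Pplus n :=
  le_max_of_le_left (Finset.le_sup (f := id) hp)

lemma rad_pos (n : ℤ) : 0 < rad n :=
  Finset.prod_pos fun _ hp => (Nat.prime_of_mem_primeFactors hp).pos

lemma rad_dvd_primorial (n : ℤ) : rad n ∣ primorial (Pplus n) := by
  apply Finset.prod_dvd_prod_of_subset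
  intro p hp
  simp only [Finset.mem_filter, Finset.mem_range]
  exact ⟨Nat.lt_succ_of_le (le_Pplus hp), Nat.prime_of_mem_primeFactors hp⟩

lemma prime_mem_primorial_set {p P : ℕ} (hp : p.Prime) (h : p ≤ P) :
    p ∈ Finset.filter Nat.Prime (Finset.range (P + 1)) := by
  simp only [Finset.mem_filter, Finset.mem_range]
  exact ⟨Nat.lt_succ_of_le h, hp⟩

lemma prime_dvd_primorial {p P : ℕ} (hp : p.Prime) (h : p ≤ P) : p ∣ primorial P :=
  Finset.dvd_prod_of_mem _ (prime_mem_primorial_set hp h)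

lemma insulated_mul_primorial (n : ℤ) (hn : n ≠ 0) :
    Insulated (n * (primorial (Pplus n) : ℤ)) := by
  set P := Pplus n with hP
  have hprim : (primorial P : ℤ) ≠ 0 := by
    exact_mod_cast (primorial_pos P).ne'
  have hm0 : n * (primorial P : ℤ) ≠ 0 := mul_ne_zero hn hprim
  have habs : (n * (primorial P : ℤ)).natAbs = n.natAbs * primorial P := by
    rw [Int.natAbs_mul, Int.natAbs_natCast]
  have hPm : Pplus (n * (primorial P : ℤ)) ≤ P := by
    have hsup : (n * (primorial P : ℤ)).natAbs.primeFactors.sup id ≤ P := by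
      apply Finset.sup_le
      intro q hq
      rw [habs, Nat.primeFactors_mul (Int.natAbs_ne_zero.mpr hn) (primorial_pos P).ne'] at hq
      rcases Finset.mem_union.mp hq with h | h
      · exact le_Pplus h
      · have hq' := Nat.prime_of_mem_primeFactors h
        have hdvd := Nat.dvd_of_mem_primeFactors h
        obtain ⟨r, hr, hqr⟩ := (hq'.prime).exists_mem_finset_dvd hdvd
        simp only [Finset.mem_filter, Finset.mem_range] at hr
        have := (Nat.prime_dvd_prime_iff_eq hq' hr.2).mp hqr
        simp only [id_eq]
        omega
    exact max_le hsup (le_max_right _ _)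
  refine ⟨hm0, fun p hp hple => ?_⟩
  have : p ∣ primorial P := prime_dvd_primorial hp (hple.trans hPm)
  exact Dvd.dvd.mul_left (by exact_mod_cast this) n

lemma insulator_mem (n : ℤ) (hn : n ≠ 0) :
    0 < insulator n ∧ Insulated (n * (insulator n : ℤ)) := by
  have : insulator n ∈ {I : ℕ | 0 < I ∧ Insulated (n * I)} :=
    Nat.sInf_mem ⟨primorial (Pplus n), primorial_pos _, insulated_mul_primorial n hn⟩
  exact this

lemma primorial_dvd_rad_mul (n : ℤ) (hn : n ≠ 0) :
    primorial (Pplus n) ∣ rad n * insulator n := by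
  obtain ⟨hIpos, hm0, hins⟩ := insulator_mem n hn
  set I := insulator n with hI
  have hI0 : (I : ℤ) ≠ 0 := by exact_mod_cast hIpos.ne'
  have habs : (n * (I : ℤ)).natAbs = n.natAbs * I := by
    rw [Int.natAbs_mul, Int.natAbs_natCast]
  have hpf : (n * (I : ℤ)).natAbs.primeFactors
      = n.natAbs.primeFactors ∪ I.primeFactors := by
    rw [habs, Nat.primeFactors_mul (Int.natAbs_ne_zero.mpr hn) hIpos.ne']
  have hPle : Pplus n ≤ Pplus (n * (I : ℤ)) := by
    apply max_le _ (le_max_right _ _)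
    apply Finset.sup_le
    intro q hq
    refine le_max_of_le_left (Finset.le_sup (f := id) ?_)
    rw [hpf]; exact Finset.mem_union_left _ hq
  -- primorial (Pplus n) divides rad (n * I)
  have hsub : Finset.filter Nat.Prime (Finset.range (Pplus n + 1))
      ⊆ (n * (I : ℤ)).natAbs.primeFactors := by
    intro p hp
    simp only [Finset.mem_filter, Finset.mem_range] at hp
    have hple : p ≤ Pplus (n * (I : ℤ)) := le_trans (Nat.lt_succ_iff.mp hp.1) hPle
    have hdvd : (p : ℤ) ∣ n * (I : ℤ) := hins p hp.2 hple
    have hd : p ∣ (n * (I : ℤ)).natAbs := by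
      have := Int.natAbs_dvd_natAbs.mpr hdvd
      simpa using this
    exact Nat.mem_primeFactors.mpr ⟨hp.2, hd, by
      rw [habs]; exact Nat.mul_ne_zero (Int.natAbs_ne_zero.mpr hn) hIpos.ne'⟩
  have h1 : primorial (Pplus n) ∣ rad (n * (I : ℤ)) :=
    Finset.prod_dvd_prod_of_subset _ _ _ hsub
  have h2 : rad (n * (I : ℤ)) ∣ rad n * ∏ p ∈ I.primeFactors, p := by
    rw [rad, hpf]
    exact ⟨∏ p ∈ n.natAbs.primeFactors ∩ I.primeFactors, p,
      (Finset.prod_union_inter).symm⟩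
  have h3 : (∏ p ∈ I.primeFactors, p) ∣ I := Nat.prod_primeFactors_dvd I
  exact h1.trans (h2.trans (mul_dvd_mul_left _ h3))

lemma Pplus_le_primorial {m : ℤ} (h : 2 ≤ Pplus m) : Pplus m ≤ primorial (Pplus m) := by
  have hsup : m.natAbs.primeFactors.sup id = Pplus m := by
    have : 1 ≤ m.natAbs.primeFactors.sup id := by
      by_contra hc
      push_neg at hc
      interval_cases h' : m.natAbs.primeFactors.sup id <;> simp_all [Pplus] <;> omega
    simp [Pplus, this]
  have hne : m.natAbs.primeFactors.Nonempty := by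
    rcases Finset.eq_empty_or_nonempty m.natAbs.primeFactors with he | hne
    · rw [he] at hsup; simp [Finset.sup_empty] at hsup; omega
    · exact hne
  obtain ⟨b, hb, hbeq⟩ := Finset.exists_mem_eq_sup _ hne id
  have hbprime := Nat.prime_of_mem_primeFactors hb
  have hbeq' : Pplus m = b := by rw [← hsup, hbeq]; rfl
  rw [hbeq']
  exact Nat.le_of_dvd (primorial_pos _) (prime_dvd_primorial hbprime le_rfl)


/-- If `P⁺(n_k) → ∞` and the insulators `𝔦(n_k)` are bounded, then for every `ε > 0`,
eventually `(1 - ε) log primorial(P⁺(n_k)) < log rad(n_k) ≤ log primorial(P⁺(n_k))`. -/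
theorem lograd_primorial_bounds (n : ℕ → ℤ) (hn : ∀ k, n k ≠ 0)
    (htend : Tendsto (fun k => (Pplus (n k) : ℝ)) atTop atTop)
    (hbdd : ∃ B : ℕ, ∀ k, insulator (n k) ≤ B)
    (ε : ℝ) (hε : 0 < ε) :
    ∀ᶠ k in atTop,
      (1 - ε) * Real.log (primorial (Pplus (n k)) : ℝ) < Real.log (rad (n k) : ℝ) ∧
      Real.log (rad (n k) : ℝ) ≤ Real.log (primorial (Pplus (n k)) : ℝ) := by
  obtain ⟨B, hB⟩ := hbdd
  have hB1 : 1 ≤ B := le_trans (insulator_mem (n 0) (hn 0)).1 (hB 0)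
  have hBR : (1 : ℝ) ≤ (B : ℝ) := by exact_mod_cast hB1
  have hkey : ∀ k, (primorial (Pplus (n k)) : ℝ) ≤ (rad (n k) : ℝ) * B := by
    intro k
    have hIpos := (insulator_mem (n k) (hn k)).1
    have h1 : primorial (Pplus (n k)) ≤ rad (n k) * insulator (n k) :=
      Nat.le_of_dvd (Nat.mul_pos (rad_pos _) hIpos) (primorial_dvd_rad_mul _ (hn k))
    have h2 : rad (n k) * insulator (n k) ≤ rad (n k) * B :=
      Nat.mul_le_mul_left _ (hB k)
    exact_mod_cast h1.trans h2
  have hlogkey : ∀ k, Real.log (primorial (Pplus (n k)) : ℝ) ≤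
      Real.log (rad (n k) : ℝ) + Real.log (B : ℝ) := by
    intro k
    rw [← Real.log_mul (by exact_mod_cast (rad_pos (n k)).ne') (by positivity)]
    exact Real.log_le_log (by exact_mod_cast primorial_pos _) (hkey k)
  have h1 : Tendsto (fun k => Real.log (Pplus (n k) : ℝ)) atTop atTop :=
    Real.tendsto_log_atTop.comp htend
  have hev2 : ∀ᶠ k in atTop, 2 ≤ Pplus (n k) := by
    filter_upwards [htend.eventually (eventually_ge_atTop (2 : ℝ))] with k hk
    exact_mod_cast hk
  have h2 : ∀ᶠ k in atTop, Real.log (Pplus (n k) : ℝ) ≤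
      Real.log (primorial (Pplus (n k)) : ℝ) := by
    filter_upwards [hev2] with k hk
    exact Real.log_le_log (by exact_mod_cast Nat.lt_of_lt_of_le Nat.zero_lt_two hk)
      (by exact_mod_cast Pplus_le_primorial hk)
  have hL : Tendsto (fun k => Real.log (primorial (Pplus (n k)) : ℝ)) atTop atTop :=
    tendsto_atTop_mono' atTop h2 h1
  have hev : ∀ᶠ k in atTop,
      Real.log (B : ℝ) / ε < Real.log (primorial (Pplus (n k)) : ℝ) :=
    hL.eventually (eventually_gt_atTop _)
  filter_upwards [hev] with k hk
  constructor
  · have hεL : Real.log (B : ℝ) < ε * Real.log (primorial (Pplus (n k)) : ℝ) := by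
      rw [div_lt_iff₀ hε] at hk
      linarith [hk, mul_comm (Real.log (primorial (Pplus (n k)) : ℝ)) ε]
    have hlk := hlogkey k
    nlinarith [hεL, hlk]
  · have h : rad (n k) ≤ primorial (Pplus (n k)) :=
      Nat.le_of_dvd (primorial_pos _) (rad_dvd_primorial _)
    exact Real.log_le_log (by exact_mod_cast rad_pos (n k)) (by exact_mod_cast h)
end

section
/- (Main Theorem) The strong form of part (a) of the XYZ Conjecture implies finiteness of insulator fibers: if for every ε > 0 there are only finitely many triples (A,B,C) ∈ 𝔛 satisfying log max{|A|,|B|,|C|} > P⁺(ABC)^{2/3 + ε}, then for every positive integer I₀ there are only finitely many (A,B,C) ∈ 𝔛 with 𝔦(ABC) = I₀. -/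
open Filter

/-!
If `𝔦(ABC) = I₀`, then `ABC · I₀` is insulated, so every prime up to `P = P⁺(ABC)` divides it
and `θ(P) = log P# ≤ log |ABC| + log I₀ ≤ 3 log H + log I₀`. Off the finite exceptional set
for `ε = 1/6` we have `log H ≤ P^{5/6}`, whereas Chebyshev's bound makes `θ(P)` grow linearly
in `P`. Hence `P` is bounded, then `log H ≤ P^{5/6}` bounds the height, and only finitely many
triples remain.
-/

open Real Asymptotics Chebyshev

lemma height_pos {A B C : ℤ} (hA : A ≠ 0) : 0 < height A B C :=
  (abs_pos.2 hA).trans_le (le_max_left _ _)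

lemma abs_mul_mul_le_height_pow_three (A B C : ℤ) : |A * B * C| ≤ height A B C ^ 3 := by
  have hA : |A| ≤ height A B C := le_max_left _ _
  have hB : |B| ≤ height A B C := (le_max_left _ _).trans (le_max_right _ _)
  have hC : |C| ≤ height A B C := (le_max_right _ _).trans (le_max_right _ _)
  have h0 : 0 ≤ height A B C := (abs_nonneg A).trans hA
  rw [abs_mul, abs_mul, pow_three, ← mul_assoc]
  exact mul_le_mul (mul_le_mul hA hB (abs_nonneg _) h0) hC (abs_nonneg _) (mul_nonneg h0 h0)

lemma log_abs_mul_mul_le_three_mul_log_height {A B C : ℤ} (h : A * B * C ≠ 0) :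
    log |((A * B * C : ℤ) : ℝ)| ≤ 3 * log (height A B C) := by
  calc log |((A * B * C : ℤ) : ℝ)| ≤ log ((height A B C : ℝ) ^ 3) :=
        log_le_log (by positivity) (by exact_mod_cast abs_mul_mul_le_height_pow_three A B C)
    _ = 3 * log (height A B C) := by rw [log_pow]; norm_num

lemma finite_setOf_height_le (N : ℤ) :
    {t : ℤ × ℤ × ℤ | height t.1 t.2.1 t.2.2 ≤ N}.Finite := by
  refine (Set.finite_Icc ((-N, -N, -N) : ℤ × ℤ × ℤ) (N, N, N)).subset ?_
  rintro ⟨A, B, C⟩ h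
  simp only [height, max_le_iff, abs_le] at h
  exact ⟨⟨h.1.1, h.2.1.1, h.2.2.1⟩, h.1.2, h.2.1.2, h.2.2.2⟩

lemma Pplus_le_of_dvd {a b : ℤ} (h : a ∣ b) (hb : b ≠ 0) : Pplus a ≤ Pplus b :=
  max_le_max_right 1 <| Finset.sup_mono <|
    Nat.primeFactors_mono (Int.natAbs_dvd_natAbs.2 h) (Int.natAbs_ne_zero.2 hb)

lemma Insulated.primorial_dvd {m : ℤ} (hm : Insulated m) {P : ℕ} (hP : P ≤ Pplus m) :
    primorial P ∣ m.natAbs := by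
  refine Finset.prod_primes_dvd _ (fun p hp => (Finset.mem_filter.1 hp).2.prime) fun p hp => ?_
  obtain ⟨hp, hpp⟩ := Finset.mem_filter.1 hp
  exact Int.natCast_dvd.1 (hm.2 p hpp ((Nat.lt_succ_iff.1 (Finset.mem_range.1 hp)).trans hP))

lemma insulated_mul_insulator {n : ℤ} (h : 0 < insulator n) : Insulated (n * insulator n) := by
  have hne : {I : ℕ | 0 < I ∧ Insulated (n * I)}.Nonempty :=
    Set.nonempty_iff_ne_empty.2 fun he => h.ne' (by rw [insulator, he, Nat.sInf_empty])
  exact (Nat.sInf_mem hne).2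

lemma theta_Pplus_le_of_insulated_mul {n : ℤ} {I : ℕ} (h : Insulated (n * I)) :
    θ (Pplus n) ≤ log |(n : ℝ)| + log I := by
  obtain ⟨hn, hI⟩ := mul_ne_zero_iff.1 h.1
  norm_cast at hI
  have hdvd := h.primorial_dvd (Pplus_le_of_dvd (dvd_mul_right n I) h.1)
  rw [Int.natAbs_mul, Int.natAbs_natCast] at hdvd
  have hle : (primorial (Pplus n) : ℝ) ≤ |(n : ℝ)| * I := by
    rw [← Int.cast_abs, ← Nat.cast_natAbs]
    exact_mod_cast Nat.le_of_dvd (Nat.pos_of_ne_zero (by simp [hn, hI])) hdvd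
  rw [theta_eq_log_primorial, Nat.floor_natCast, ← log_mul (by positivity) (by exact_mod_cast hI)]
  exact log_le_log (by exact_mod_cast primorial_pos _) hle

lemma isLittleO_rpow_id_atTop {r : ℝ} (hr : r < 1) : (fun x : ℝ => x ^ r) =o[atTop] id := by
  have hone : (fun _ : ℝ => (1 : ℝ)) =o[atTop] fun x => x ^ (1 - r) :=
    isLittleO_const_left.2 <| .inr <|
      tendsto_abs_atTop_atTop.comp (tendsto_rpow_atTop (by linarith))
  refine ((isBigO_refl (fun x : ℝ => x ^ r) atTop).mul_isLittleO hone).congr' ?_ ?_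
  · simp
  · filter_upwards [eventually_gt_atTop 0] with x hx
    rw [← rpow_add hx, add_sub_cancel, rpow_one, id]

lemma isLittleO_log_add_const_id_atTop (c : ℝ) : (fun x : ℝ => log (x + c)) =o[atTop] id := by
  have hshift : (fun x : ℝ => x + c) =O[atTop] id :=
    (isBigO_refl id atTop).add (isLittleO_const_id_atTop c).isBigO
  exact (isLittleO_log_id_atTop.comp_tendsto
    (tendsto_atTop_add_const_right _ c tendsto_id)).trans_isBigO hshift

lemma isLittleO_sqrt_mul_log_id_atTop : (fun x : ℝ => √x * log x) =o[atTop] id := by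
  refine ((isBigO_refl sqrt atTop).mul_isLittleO
    (isLittleO_log_rpow_atTop one_half_pos)).congr' ?_ ?_
  · rfl
  · filter_upwards [eventually_ge_atTop 0] with x hx
    rw [sqrt_eq_rpow, ← rpow_add' hx (by norm_num), add_halves, rpow_one, id]

theorem eventually_mul_rpow_add_lt_theta {r : ℝ} (hr : r < 1) (a b : ℝ) :
    ∀ᶠ x in atTop, a * x ^ r + b < θ x := by
  have hlog2 : 0 < log 2 := log_pos one_lt_two
  -- everything that Chebyshev's lower bound `theta_ge'` loses against `x log 2`, plus `a x^r + b`
  have herr :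
      (fun x : ℝ => a * x ^ r + b + log 2 + log (x + 2) + 2 * (√x * log x)) =o[atTop] id :=
    ((((isLittleO_rpow_id_atTop hr).const_mul_left a).add (isLittleO_const_id_atTop b)).add
      (isLittleO_const_id_atTop _)).add (isLittleO_log_add_const_id_atTop 2) |>.add
      (isLittleO_sqrt_mul_log_id_atTop.const_mul_left 2)
  filter_upwards [herr.bound (half_pos hlog2), eventually_ge_atTop 1] with x hbound hx
  rw [id, norm_of_nonneg (by linarith : (0 : ℝ) ≤ x)] at hbound
  linarith [theta_ge' hx, le_norm_self (a * x ^ r + b + log 2 + log (x + 2) + 2 * (√x * log x)),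
    mul_pos hlog2 (by linarith : (0 : ℝ) < x)]

/-- Main Theorem: the strong form of part (a) of the XYZ Conjecture implies that
only finitely many solutions in 𝔛 have any given insulator. -/
theorem strong_xyz_implies_finite_insulator_fibers
    (hstrong : ∀ ε : ℝ, 0 < ε →
      {t : ℤ × ℤ × ℤ | IsABC t.1 t.2.1 t.2.2 ∧
        Real.log ((height t.1 t.2.1 t.2.2 : ℤ) : ℝ) >
          ((Pplus (t.1 * t.2.1 * t.2.2) : ℕ) : ℝ) ^ ((2 : ℝ) / 3 + ε)}.Finite) :
    ∀ I₀ : ℕ, 0 < I₀ →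
      {t : ℤ × ℤ × ℤ | IsABC t.1 t.2.1 t.2.2 ∧
        insulator (t.1 * t.2.1 * t.2.2) = I₀}.Finite := by
  intro I₀ hI₀
  obtain ⟨x₀, hx₀⟩ := eventually_atTop.1 <|
    eventually_mul_rpow_add_lt_theta (show (5 / 6 : ℝ) < 1 by norm_num) 3 (log I₀)
  refine ((hstrong (1 / 6) (by norm_num)).union
    (finite_setOf_height_le ⌈exp (x₀ ^ (5 / 6 : ℝ))⌉)).subset ?_
  rintro ⟨A, B, C⟩ ⟨habc, hins⟩
  set P := Pplus (A * B * C)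
  by_cases hexc : log (height A B C) > (P : ℝ) ^ ((2 : ℝ) / 3 + 1 / 6)
  · exact Or.inl ⟨habc, hexc⟩
  have hlogH : log (height A B C) ≤ (P : ℝ) ^ (5 / 6 : ℝ) := by
    norm_num at hexc ⊢
    exact hexc
  have hθ : θ P ≤ 3 * (P : ℝ) ^ (5 / 6 : ℝ) + log I₀ := by
    linarith [theta_Pplus_le_of_insulated_mul (hins ▸ insulated_mul_insulator (hins ▸ hI₀)),
      log_abs_mul_mul_le_three_mul_log_height habc.2.2]
  have hP : (P : ℝ) ≤ x₀ := not_lt.1 fun h => (hx₀ P h.le).not_ge hθ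
  have hH : (0 : ℝ) < height A B C := by
    exact_mod_cast height_pos (left_ne_zero_of_mul (left_ne_zero_of_mul habc.2.2))
  right
  refine Int.cast_le.1 (le_trans ?_ (Int.le_ceil _))
  rw [← log_le_iff_le_exp hH]
  exact hlogH.trans (rpow_le_rpow P.cast_nonneg hP (by norm_num))
end
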